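/- For ξ > 0, the amplification factor g(ξ) = ρ_PI(ξ)/(1 - ρ_PI(ξ)) = arctan(ξ)/(ξ - arctan(ξ)) is strictly decreasing on (0, ∞), tends to +∞ as ξ → 0⁺, and tends to 0 as ξ → ∞. -/

import Mathlib

/-!
Writing `arctan ξ / (ξ - arctan ξ) = (ξ / arctan ξ - 1)⁻¹`, everything reduces to the behaviour of
`ξ / arctan ξ` on `(0, ∞)`: it exceeds `1` because `arctan ξ < ξ`, it is strictly increasing because
`arctan` is strictly concave on `[0, ∞)` and vanishes at `0` (so its secant slopes from the origin
decrease), it tends to `1 / arctan' 0 = 1` as `ξ → 0⁺`, and to `∞` as `ξ → ∞` since `arctan < π / 2`.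
-/

open Filter Set Topology Real

namespace Real

lemma arctan_lt_self {x : ℝ} (hx : 0 < x) : arctan x < x := by
  simpa only [tan_arctan] using lt_tan (arctan_pos.2 hx) (arctan_lt_pi_div_two x)

lemma strictConcaveOn_arctan : StrictConcaveOn ℝ (Ici 0) arctan := by
  refine StrictAntiOn.strictConcaveOn_of_deriv (convex_Ici 0) continuous_arctan.continuousOn ?_
  rw [interior_Ici, deriv_arctan]
  intro a (ha : 0 < a) b _ hab
  show 1 / (1 + b ^ 2) < 1 / (1 + a ^ 2)
  gcongr

lemma one_lt_div_arctan {x : ℝ} (hx : 0 < x) : 1 < x / arctan x :=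
  (one_lt_div (arctan_pos.2 hx)).2 (arctan_lt_self hx)

lemma strictMonoOn_div_arctan : StrictMonoOn (fun x => x / arctan x) (Ioi 0) := by
  intro a ha b hb hab
  have hslope := strictConcaveOn_arctan.secant_strict_mono self_mem_Ici
    (Ioi_subset_Ici_self ha) (Ioi_subset_Ici_self hb) (ne_of_gt ha) (ne_of_gt hb) hab
  simp only [arctan_zero, sub_zero] at hslope
  simp only [← inv_div (arctan _)]
  exact inv_strictAntiOn (div_pos (arctan_pos.2 hb) hb) (div_pos (arctan_pos.2 ha) ha) hslope

lemma tendsto_div_arctan_nhdsGT_zero : Tendsto (fun x => x / arctan x) (𝓝[>] 0) (𝓝 1) := by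
  have hslope := hasDerivAt_iff_tendsto_slope_zero.1 (hasDerivAt_arctan 0)
  simp only [zero_add, arctan_zero, sub_zero, smul_eq_mul, ne_eq, OfNat.ofNat_ne_zero,
    not_false_eq_true, zero_pow, add_zero, div_one] at hslope
  simpa only [inv_mul_eq_div, inv_div, inv_one] using
    (hslope.mono_left (nhdsGT_le_nhdsNE 0)).inv₀ one_ne_zero

lemma tendsto_div_arctan_atTop : Tendsto (fun x => x / arctan x) atTop atTop := by
  refine tendsto_atTop_mono' _ ?_ (tendsto_id.atTop_div_const (div_pos pi_pos two_pos))
  filter_upwards [eventually_gt_atTop 0] with x hx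
  exact div_le_div_of_nonneg_left hx.le (arctan_pos.2 hx) (arctan_lt_pi_div_two x).le

lemma arctan_div_sub_arctan {x : ℝ} (hx : x ≠ 0) :
    arctan x / (x - arctan x) = (x / arctan x - 1)⁻¹ := by
  rw [div_sub_one (by simpa using hx), inv_div]

end Real

theorem stmt_10 :
    StrictAntiOn (fun ξ : ℝ => Real.arctan ξ / (ξ - Real.arctan ξ)) (Set.Ioi 0) ∧
    Filter.Tendsto (fun ξ : ℝ => Real.arctan ξ / (ξ - Real.arctan ξ))
      (nhdsWithin 0 (Set.Ioi 0)) Filter.atTop ∧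
    Filter.Tendsto (fun ξ : ℝ => Real.arctan ξ / (ξ - Real.arctan ξ))
      Filter.atTop (nhds 0) := by
  have hEq : EqOn (fun x => (x / arctan x - 1)⁻¹) (fun ξ => arctan ξ / (ξ - arctan ξ)) (Ioi 0) :=
    fun x hx => (arctan_div_sub_arctan (ne_of_gt hx)).symm
  have hpos {x : ℝ} (hx : 0 < x) : 0 < x / arctan x - 1 := sub_pos.2 (one_lt_div_arctan hx)
  refine ⟨?_, ?_, ?_⟩
  · refine StrictAntiOn.congr (fun a ha b hb hab => ?_) hEq
    exact inv_strictAntiOn (hpos ha) (hpos hb)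
      (sub_lt_sub_right (strictMonoOn_div_arctan ha hb hab) 1)
  · have hlim : Tendsto (fun x => x / arctan x - 1) (𝓝[>] 0) (𝓝[>] 0) :=
      tendsto_nhdsWithin_of_tendsto_nhds_of_eventually_within _
        (by simpa using tendsto_div_arctan_nhdsGT_zero.sub_const 1)
        (eventually_nhdsWithin_of_forall fun _ hx => hpos hx)
    exact (tendsto_inv_nhdsGT_zero.comp hlim).congr' (eventuallyEq_nhdsWithin_of_eqOn hEq)
  · exact (tendsto_inv_atTop_zero.comp (tendsto_atTop_add_const_right _ (-1)
      tendsto_div_arctan_atTop)).congr' (hEq.eventuallyEq_of_mem (Ioi_mem_atTop 0))
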